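/- Suppose m' ≥ ⌊n/m⌋ and set c = n/m - ⌊n/m⌋. For every choice of transition probabilities p_0, …, p_{m'} ∈ [0,1] such that the first return time X to state 0 of the age Markov chain started at 0 is almost surely finite and satisfies E[X] = n/m, one has Var[X] ≥ c(1 - c). In particular, since X is a positive-integer-valued random variable with mean n/m, the minimum possible variance c(1 - c) is attained by the policy p_0 = ⋯ = p_{i-2} = 0, p_{i-1} = i + 1 - n/m, p_i = ⋯ = p_{m'} = 1 with i = ⌊n/m⌋. -/

import Mathlib

open MeasureTheory ProbabilityTheory Finset
open scoped ProbabilityTheory ENNReal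

noncomputable section

/-- The age Markov chain on `{0, 1, …, m'}` started at state `0`, driven by a
sequence `U` of random numbers: at time `t`, if the chain is in state `j`, it
moves to `0` when `U t < p j` and otherwise moves to `min (j+1) m'`. -/
def ageChain {Ω : Type*} (m' : ℕ) (p : ℕ → ℝ) (U : ℕ → Ω → ℝ) : ℕ → Ω → ℕ
  | 0, _ => 0
  | t + 1, ω =>
      if U t ω < p (ageChain m' p U t ω) then 0
      else min (ageChain m' p U t ω + 1) m'

/-- The first return time to state `0` of the age chain started at `0`. -/
def firstReturn {Ω : Type*} (m' : ℕ) (p : ℕ → ℝ) (U : ℕ → Ω → ℝ) (ω : Ω) : ℕ :=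
  sInf {t | 1 ≤ t ∧ ageChain m' p U t ω = 0}

/-- The policy `p_0 = ⋯ = p_{i-2} = 0`, `p_{i-1} = i + 1 - n/m`,
`p_i = ⋯ = p_{m'} = 1`, with `i = ⌊n/m⌋`. -/
def optPolicyB (n m : ℕ) : ℕ → ℝ :=
  fun j => if j + 1 < n / m then 0
    else if j + 1 = n / m then ((n / m : ℕ) : ℝ) + 1 - (n : ℝ) / m
    else 1

lemma ageChain_succ {Ω : Type*} (m' : ℕ) (p : ℕ → ℝ) (U : ℕ → Ω → ℝ) (t : ℕ) (ω : Ω) :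
    ageChain m' p U (t+1) ω =
      if U t ω < p (ageChain m' p U t ω) then 0
      else min (ageChain m' p U t ω + 1) m' := rfl

lemma measurable_ageChain {Ω : Type*} [MeasurableSpace Ω] (m' : ℕ) (p : ℕ → ℝ)
    (U : ℕ → Ω → ℝ) (hU : ∀ t, Measurable (U t)) (t : ℕ) :
    Measurable (ageChain m' p U t) := by
  induction t with
  | zero => exact measurable_const
  | succ t ih =>
    have h1 : Measurable fun ω => p (ageChain m' p U t ω) :=
      measurable_from_nat.comp ih
    have h2 : Measurable fun ω => min (ageChain m' p U t ω + 1) m' :=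
      (measurable_from_nat (f := fun j => min (j+1) m')).comp ih
    exact Measurable.ite (measurableSet_lt (hU t) h1) measurable_const h2

lemma measurable_firstReturn {Ω : Type*} [MeasurableSpace Ω] (m' : ℕ) (p : ℕ → ℝ)
    (U : ℕ → Ω → ℝ) (hU : ∀ t, Measurable (U t)) :
    Measurable (firstReturn m' p U) := by
  have hE : ∀ t : ℕ, MeasurableSet {ω | 1 ≤ t ∧ ageChain m' p U t ω = 0} := by
    intro t
    have h : MeasurableSet ((ageChain m' p U t) ⁻¹' {0}) :=
      (measurable_ageChain m' p U hU t) (measurableSet_singleton 0)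
    by_cases h1 : 1 ≤ t
    · have : {ω | 1 ≤ t ∧ ageChain m' p U t ω = 0} = (ageChain m' p U t) ⁻¹' {0} := by
        ext ω; simp [h1]
      rw [this]; exact h
    · have : {ω | 1 ≤ t ∧ ageChain m' p U t ω = 0} = ∅ := by
        ext ω; simp [h1]
      rw [this]; exact MeasurableSet.empty
  apply measurable_to_countable'
  intro j
  rcases j with _ | j
  · have : firstReturn m' p U ⁻¹' {0} = ⋂ t, {ω | 1 ≤ t ∧ ageChain m' p U t ω = 0}ᶜ := by
      ext ω
      simp only [Set.mem_preimage, Set.mem_singleton_iff, Set.mem_iInter, Set.mem_compl_iff,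
        Set.mem_setOf_eq, firstReturn]
      constructor
      · intro h t ht
        rcases Nat.sInf_eq_zero.mp h with h0 | h0
        · exact absurd h0.1 (by norm_num)
        · exact absurd ht (by rw [Set.eq_empty_iff_forall_notMem] at h0; exact h0 t)
      · intro h
        rw [Nat.sInf_eq_zero]
        right
        rw [Set.eq_empty_iff_forall_notMem]
        exact h
    rw [this]
    exact MeasurableSet.iInter fun t => (hE t).compl
  · have : firstReturn m' p U ⁻¹' {j+1} =
        {ω | 1 ≤ j+1 ∧ ageChain m' p U (j+1) ω = 0} ∩
          ⋂ i, ⋂ _ : i < j + 1, {ω | 1 ≤ i ∧ ageChain m' p U i ω = 0}ᶜ := by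
      ext ω
      simp only [Set.mem_preimage, Set.mem_singleton_iff, Set.mem_inter_iff, Set.mem_iInter,
        Set.mem_compl_iff, Set.mem_setOf_eq, firstReturn]
      constructor
      · intro h
        have hne : {t | 1 ≤ t ∧ ageChain m' p U t ω = 0}.Nonempty := by
          by_contra hc
          rw [Set.not_nonempty_iff_eq_empty] at hc
          rw [hc, Nat.sInf_empty] at h
          exact absurd h (by omega)
        have hmem := Nat.sInf_mem hne
        rw [h] at hmem
        refine ⟨hmem, fun i hi => Nat.notMem_of_lt_sInf (by rw [h]; exact hi)⟩
      · rintro ⟨hmem, hlt⟩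
        refine le_antisymm (Nat.sInf_le hmem) (le_csInf ⟨_, hmem⟩ fun b hb => ?_)
        by_contra hbk
        push_neg at hbk
        exact hlt b (by omega) hb
    rw [this]
    exact (hE _).inter (MeasurableSet.iInter fun i => MeasurableSet.iInter fun _ => (hE i).compl)

lemma ageChain_opt {Ω : Type*} (n m m' : ℕ) (hk1 : 1 ≤ n / m) (hm' : n / m ≤ m')
    (U : ℕ → Ω → ℝ) (ω : Ω) (h0 : ∀ j, j + 1 < n / m → 0 ≤ U j ω) :
    ∀ t, t < n / m → ageChain m' (optPolicyB n m) U t ω = t := by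
  intro t
  induction t with
  | zero => intro _; rfl
  | succ t ih =>
    intro ht
    have ht' : t < n / m := Nat.lt_of_succ_lt ht
    rw [ageChain_succ, ih ht']
    have hp : optPolicyB n m t = 0 := by simp [optPolicyB, ht]
    rw [hp]
    rw [if_neg (not_lt.mpr (h0 t ht))]
    omega

lemma firstReturn_opt {Ω : Type*} (n m m' : ℕ) (hk1 : 1 ≤ n / m) (hm' : n / m ≤ m')
    (U : ℕ → Ω → ℝ) (ω : Ω)
    (h0 : ∀ j, j + 1 < n / m → 0 ≤ U j ω) (h1 : U (n / m) ω < 1) :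
    firstReturn m' (optPolicyB n m) U ω
      = if U (n / m - 1) ω < ((n / m : ℕ) : ℝ) + 1 - (n : ℝ) / m then n / m
        else n / m + 1 := by
  set k := n / m with hkdef
  set P := optPolicyB n m with hP
  have hage : ∀ t, t < k → ageChain m' P U t ω = t :=
    ageChain_opt n m m' hk1 hm' U ω h0
  have hk1' : k - 1 + 1 = k := Nat.succ_pred_eq_of_pos hk1
  have hpk1 : P (k - 1) = ((k : ℕ) : ℝ) + 1 - (n : ℝ) / m := by
    rw [hP]
    unfold optPolicyB
    rw [hk1']
    simp [hkdef]
  have hagek : ageChain m' P U k ω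
      = if U (k-1) ω < ((k : ℕ) : ℝ) + 1 - (n : ℝ) / m then 0 else k := by
    conv_lhs => rw [← hk1']
    rw [ageChain_succ, hage (k-1) (by omega), hpk1, hk1']
    split_ifs <;> omega
  have hpk : P k = 1 := by
    rw [hP]; unfold optPolicyB; simp [hkdef]
  split_ifs with hcond
  · -- firstReturn = k
    rw [if_pos hcond] at hagek
    refine le_antisymm (Nat.sInf_le ⟨hk1, hagek⟩) (le_csInf ⟨k, hk1, hagek⟩ ?_)
    intro b hb
    by_contra hbk
    push_neg at hbk
    have := hage b hbk
    obtain ⟨hb1, hb2⟩ := hb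
    omega
  · rw [if_neg hcond] at hagek
    have hagek1 : ageChain m' P U (k+1) ω = 0 := by
      rw [ageChain_succ, hagek, hpk, if_pos h1]
    refine le_antisymm (Nat.sInf_le ⟨by omega, hagek1⟩) (le_csInf ⟨k+1, by omega, hagek1⟩ ?_)
    intro b hb
    by_contra hbk
    push_neg at hbk
    rcases Nat.lt_or_ge b k with hbk' | hbk'
    · have h2 := hage b hbk'
      obtain ⟨hb1, hb2⟩ := hb
      omega
    · have hbe : b = k := by omega
      obtain ⟨hb1, hb2⟩ := hb
      rw [hbe, hagek] at hb2
      omega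


/-- Optimality in the regime `m' ≥ ⌊n/m⌋`, with `c = n/m - ⌊n/m⌋`: every choice
of transition probabilities `p_0, …, p_{m'} ∈ [0,1]` whose first return time `X`
to state `0` is almost surely finite and has mean `n/m` satisfies
`Var[X] ≥ c(1-c)`; this minimum variance is attained by the policy
`p_0 = ⋯ = p_{i-2} = 0`, `p_{i-1} = i + 1 - n/m`, `p_i = ⋯ = p_{m'} = 1`
with `i = ⌊n/m⌋` (which also has mean `n/m`). -/
theorem firstReturn_variance_optimal_B
    {Ω : Type*} [MeasureSpace Ω] [IsProbabilityMeasure (ℙ : Measure Ω)]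
    (n m m' : ℕ) (hm : 0 < m) (hmn : m < n) (hm' : n / m ≤ m')
    (U : ℕ → Ω → ℝ) (hUmeas : ∀ t, Measurable (U t))
    (hUindep : iIndepFun U ℙ)
    (hUunif : ∀ t, Measure.map (U t) ℙ = volume.restrict (Set.Icc (0 : ℝ) 1)) :
    (∀ p : ℕ → ℝ, (∀ j ≤ m', p j ∈ Set.Icc (0 : ℝ) 1) →
      ℙ {ω | ∃ t, 1 ≤ t ∧ ageChain m' p U t ω = 0} = 1 →
      (∫ ω, (firstReturn m' p U ω : ℝ) ∂ℙ = (n : ℝ) / m) →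
      ENNReal.ofReal (((n : ℝ) / m - ((n / m : ℕ) : ℝ))
          * (1 - ((n : ℝ) / m - ((n / m : ℕ) : ℝ))))
        ≤ evariance (fun ω => (firstReturn m' p U ω : ℝ)) ℙ) ∧
    (∫ ω, (firstReturn m' (optPolicyB n m) U ω : ℝ) ∂ℙ = (n : ℝ) / m) ∧
    variance (fun ω => (firstReturn m' (optPolicyB n m) U ω : ℝ)) ℙ
      = ((n : ℝ) / m - ((n / m : ℕ) : ℝ)) * (1 - ((n : ℝ) / m - ((n / m : ℕ) : ℝ))) := by
  have hm0 : (0:ℝ) < m := by exact_mod_cast hm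
  set k : ℕ := n / m with hkdef
  have hk1 : 1 ≤ k := (Nat.one_le_div_iff hm).mpr hmn.le
  set μr : ℝ := (n:ℝ)/m with hμr
  have hkμ : (k:ℝ) ≤ μr := Nat.cast_div_le
  have hμk1 : μr < (k:ℝ) + 1 := by
    have h := Nat.lt_mul_div_succ n hm
    have h2 : (n:ℝ) < (m:ℝ) * ((k:ℝ)+1) := by exact_mod_cast h
    rw [hμr, div_lt_iff₀ hm0]; linarith
  set c : ℝ := μr - (k:ℝ) with hcdef
  have hc0 : 0 ≤ c := by simp [hcdef]; linarith
  have hc1 : c < 1 := by simp [hcdef]; linarith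
  constructor
  · -- lower bound
    intro p hp hfin hmean
    set X : Ω → ℝ := fun ω => (firstReturn m' p U ω : ℝ) with hXdef
    have hXm : Measurable X := measurable_from_nat.comp (measurable_firstReturn m' p U hUmeas)
    by_cases hL2 : MemLp X 2 ℙ
    · rw [← hL2.ofReal_variance_eq]
      apply ENNReal.ofReal_le_ofReal
      have hXint : Integrable X ℙ := hL2.integrable one_le_two
      have hX2 : Integrable (fun ω => X ω ^ 2) ℙ := hL2.integrable_sq
      have hvar : variance X ℙ = (∫ ω, X ω ^ 2 ∂ℙ) - μr ^ 2 := by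
        rw [variance_eq_sub hL2]
        simp only [Pi.pow_apply]
        rw [hmean]
      have key : 0 ≤ ∫ ω, (X ω - k) * (X ω - ((k:ℝ)+1)) ∂ℙ := by
        apply integral_nonneg
        intro ω
        simp only [Pi.zero_apply]
        rcases le_or_gt (firstReturn m' p U ω) k with h | h
        · have h1 : X ω ≤ (k:ℝ) := by
            simp only [hXdef]; exact_mod_cast h
          nlinarith [h1]
        · have h1 : (k:ℝ) + 1 ≤ X ω := by
            simp only [hXdef]; exact_mod_cast h
          nlinarith [h1]
      have expand : ∫ ω, (X ω - k) * (X ω - ((k:ℝ)+1)) ∂ℙ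
          = (∫ ω, X ω ^ 2 ∂ℙ) - ((2*(k:ℝ)+1) * μr - (k:ℝ)*((k:ℝ)+1)) := by
        have hfun : (fun ω => (X ω - k) * (X ω - ((k:ℝ)+1)))
            = fun ω => (X ω ^ 2) - ((2*(k:ℝ)+1) * X ω - (k:ℝ)*((k:ℝ)+1)) := by
          funext ω; ring
        have hg1 : Integrable (fun ω => (2*(k:ℝ)+1) * X ω) ℙ := hXint.const_mul _
        have hg : Integrable (fun ω => (2*(k:ℝ)+1) * X ω - (k:ℝ)*((k:ℝ)+1)) ℙ :=
          hg1.sub (integrable_const _)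
        rw [hfun, integral_sub hX2 hg, integral_sub hg1 (integrable_const _),
          integral_const_mul, hmean, integral_const, probReal_univ, one_smul]
      rw [expand] at key
      rw [hvar, hcdef]
      nlinarith [key]
    · rw [evariance_eq_top hXm.aestronglyMeasurable hL2]
      exact le_top
  · -- optimal policy
    have hgood : ∀ᵐ ω ∂ℙ, (∀ j, j + 1 < k → 0 ≤ U j ω) ∧ U k ω < 1 := by
      have hU01 : ∀ t, ∀ᵐ ω ∂ℙ, U t ω ∈ Set.Icc (0:ℝ) 1 := by
        intro t
        have hs : MeasurableSet ((U t) ⁻¹' (Set.Icc (0:ℝ) 1)) := (hUmeas t) measurableSet_Icc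
        have h1 : ℙ ((U t) ⁻¹' (Set.Icc (0:ℝ) 1)) = 1 := by
          rw [← Measure.map_apply (hUmeas t) measurableSet_Icc, hUunif t,
            Measure.restrict_apply_self, Real.volume_Icc]
          norm_num
        have h0 : ℙ ((U t) ⁻¹' (Set.Icc (0:ℝ) 1))ᶜ = 0 := (prob_compl_eq_zero_iff hs).mpr h1
        rw [ae_iff]
        exact h0
      have hUne1 : ∀ᵐ ω ∂ℙ, U k ω ≠ 1 := by
        have h1 : ℙ ((U k) ⁻¹' {1}) = 0 := by
          rw [← Measure.map_apply (hUmeas k) (measurableSet_singleton 1), hUunif k,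
            Measure.restrict_apply (measurableSet_singleton 1)]
          exact measure_mono_null Set.inter_subset_left Real.volume_singleton
        rw [ae_iff]
        exact measure_mono_null (fun ω hω => not_not.mp hω) h1
      have hall : ∀ᵐ ω ∂ℙ, ∀ j, U j ω ∈ Set.Icc (0:ℝ) 1 := ae_all_iff.mpr hU01
      filter_upwards [hall, hUne1] with ω hω h1
      exact ⟨fun j _ => (hω j).1, lt_of_le_of_ne (hω k).2 h1⟩
    set B : Set Ω := {ω | U (k-1) ω < (k:ℝ) + 1 - μr} with hBdef
    have hBmeas : MeasurableSet B := measurableSet_lt (hUmeas (k-1)) measurable_const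
    have hPB : ℙ B = ENNReal.ofReal (1 - c) := by
      have hBeq : B = (U (k-1)) ⁻¹' (Set.Iio (1-c)) := by
        ext ω
        simp only [hBdef, Set.mem_setOf_eq, Set.mem_preimage, Set.mem_Iio, hcdef]
        constructor <;> intro <;> linarith
      rw [hBeq, ← Measure.map_apply (hUmeas (k-1)) measurableSet_Iio, hUunif (k-1),
        Measure.restrict_apply measurableSet_Iio]
      have : Set.Iio (1-c) ∩ Set.Icc (0:ℝ) 1 = Set.Ico (0:ℝ) (1-c) := by
        ext x
        simp only [Set.mem_inter_iff, Set.mem_Iio, Set.mem_Icc, Set.mem_Ico]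
        constructor
        · rintro ⟨hx, h0, _⟩; exact ⟨h0, hx⟩
        · rintro ⟨h0, hx⟩; exact ⟨hx, h0, by linarith⟩
      rw [this, Real.volume_Ico, sub_zero]
    have hXae : (fun ω => (firstReturn m' (optPolicyB n m) U ω : ℝ))
        =ᵐ[ℙ] fun ω => if ω ∈ B then (k:ℝ) else (k:ℝ)+1 := by
      filter_upwards [hgood] with ω hω
      rw [firstReturn_opt n m m' hk1 hm' U ω hω.1 hω.2]
      have hBiff : ω ∈ B ↔ U (k-1) ω < ((k:ℕ):ℝ) + 1 - (n:ℝ)/m := Iff.rfl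
      by_cases h : ω ∈ B
      · rw [if_pos (hBiff.mp h), if_pos h]
      · rw [if_neg (fun hc => h (hBiff.mpr hc)), if_neg h]
        push_cast
        ring
    have hind : ∀ x y : ℝ, ∫ ω, (if ω ∈ B then x else y) ∂ℙ = x * (1-c) + y * c := by
      intro x y
      have hfun : (fun ω => if ω ∈ B then x else y)
          = fun ω => B.indicator (fun _ => x - y) ω + y := by
        funext ω; by_cases h : ω ∈ B <;> simp [Set.indicator, h]
      rw [hfun, integral_add ((integrable_const (x-y)).indicator hBmeas) (integrable_const y),
        integral_indicator_const _ hBmeas, integral_const, probReal_univ,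
        one_smul, measureReal_def, hPB, ENNReal.toReal_ofReal (by linarith), smul_eq_mul]
      ring
    have hmean2 : ∫ ω, (firstReturn m' (optPolicyB n m) U ω : ℝ) ∂ℙ = μr := by
      rw [integral_congr_ae hXae, hind, hcdef]
      ring
    refine ⟨hmean2, ?_⟩
    -- variance
    have hgm : Measurable fun ω => if ω ∈ B then (k:ℝ) else (k:ℝ)+1 :=
      Measurable.ite hBmeas measurable_const measurable_const
    have hgbd : ∀ᵐ ω ∂ℙ, (if ω ∈ B then (k:ℝ) else (k:ℝ)+1) ∈ Set.Icc (0:ℝ) ((k:ℝ)+1) := by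
      refine ae_of_all _ fun ω => ?_
      split_ifs <;> exact ⟨by positivity, by norm_num⟩
    have hgL2 : MemLp (fun ω => if ω ∈ B then (k:ℝ) else (k:ℝ)+1) 2 ℙ :=
      memLp_of_bounded hgbd hgm.aestronglyMeasurable 2
    have hL2X : MemLp (fun ω => (firstReturn m' (optPolicyB n m) U ω : ℝ)) 2 ℙ :=
      hgL2.ae_eq hXae.symm
    rw [variance_eq_sub hL2X]
    simp only [Pi.pow_apply]
    have hX2int : ∫ ω, (firstReturn m' (optPolicyB n m) U ω : ℝ) ^ 2 ∂ℙ
        = (k:ℝ)^2 * (1-c) + ((k:ℝ)+1)^2 * c := by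
      have hsq : (fun ω => (firstReturn m' (optPolicyB n m) U ω : ℝ) ^ 2)
          =ᵐ[ℙ] fun ω => if ω ∈ B then (k:ℝ)^2 else ((k:ℝ)+1)^2 := by
        filter_upwards [hXae] with ω h
        rw [h]
        split_ifs <;> ring
      rw [integral_congr_ae hsq, hind]
    rw [hX2int, hmean2, hcdef]
    ring
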